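/- arXiv:1911.01979 — 2 statements merged into one kernel-verified Lean document; each statement's English description precedes it below -/
import Mathlib

section
/- Let (λ^{(N)}_s)_{s=1,...,m_N} be triangular arrays of nonnegative reals in decreasing order with Σ_s (λ^{(N)}_s)² > 0, and β^{(N)}_s = λ^{(N)}_s / sqrt(Σ_ℓ (λ^{(N)}_ℓ)²), f_N = (Σ_s (λ^{(N)}_s)²)³/(Σ_s (λ^{(N)}_s)³)². Then β^{(N)}_1 → 0 if and only if f_N → ∞. -/
/-!
Write `L = λ₁`, `S₂ = ∑ λₛ²`, `S₃ = ∑ λₛ³`, so that `β₁ = L / √S₂` and `f = S₂³ / S₃²`.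
Since `L³ ≤ S₃ ≤ L S₂`, the quantity `f` is squeezed between `S₂ / L² = β₁⁻²` and
`S₂³ / L⁶ = β₁⁻⁶`; hence `f → ∞` exactly when `β₁⁻¹ → ∞`, i.e. when `β₁ → 0`.
-/

open Filter

section Asymptotics

variable {ι : Type*} {l : Filter ι}

lemma tendsto_nhds_zero_iff_tendsto_inv_atTop {b : ι → ℝ} (hb : ∀ i, 0 < b i) :
    Tendsto b l (nhds 0) ↔ Tendsto b⁻¹ l atTop := by
  refine ⟨fun h => ?_, fun h => inv_inv b ▸ h.inv_tendsto_atTop⟩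
  exact (tendsto_nhdsWithin_iff.2 ⟨h, .of_forall hb⟩).inv_tendsto_nhdsGT_zero

lemma tendsto_pow_atTop_iff_of_nonneg {g : ι → ℝ} (hg : ∀ i, 0 ≤ g i) {k : ℕ} (hk : k ≠ 0) :
    Tendsto (fun i => g i ^ k) l atTop ↔ Tendsto g l atTop := by
  refine ⟨fun h => ?_, fun h => (tendsto_pow_atTop hk).comp h⟩
  have hroot := (tendsto_rpow_atTop (y := (k : ℝ)⁻¹) (by positivity)).comp h
  simpa only [Function.comp_def, Real.pow_rpow_inv_natCast (hg _) hk] using hroot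

lemma tendsto_atTop_iff_of_pow_le_of_le_pow {g f : ι → ℝ} (hg : ∀ i, 0 ≤ g i) {j k : ℕ}
    (hj : j ≠ 0) (hk : k ≠ 0) (hlow : ∀ i, g i ^ j ≤ f i) (hup : ∀ i, f i ≤ g i ^ k) :
    Tendsto g l atTop ↔ Tendsto f l atTop := by
  constructor
  · exact fun h => tendsto_atTop_mono hlow ((tendsto_pow_atTop_iff_of_nonneg hg hj).2 h)
  · exact fun h => (tendsto_pow_atTop_iff_of_nonneg hg hk).1 (tendsto_atTop_mono hup h)

end Asymptotics

section PowerSums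

variable {ι : Type*} [Fintype ι] {l : ι → ℝ} {i : ι}

lemma pos_of_sum_sq_pos (hnn : ∀ s, 0 ≤ l s) (hmax : ∀ s, l s ≤ l i)
    (hpos : 0 < ∑ s, l s ^ 2) : 0 < l i := by
  by_contra! h
  have hzero : ∀ s, l s = 0 := fun s => le_antisymm ((hmax s).trans h) (hnn s)
  simp [hzero] at hpos

lemma sum_pow_three_le_mul_sum_sq (hmax : ∀ s, l s ≤ l i) :
    ∑ s, l s ^ 3 ≤ l i * ∑ s, l s ^ 2 := by
  rw [Finset.mul_sum]
  gcongr with s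
  calc l s ^ 3 = l s * l s ^ 2 := by ring
    _ ≤ l i * l s ^ 2 := by gcongr; exact hmax s

lemma inv_div_sqrt_sum_sq_pow_two_le (hnn : ∀ s, 0 ≤ l s) (hmax : ∀ s, l s ≤ l i)
    (hi : 0 < l i) :
    (l i / √(∑ s, l s ^ 2))⁻¹ ^ 2 ≤ (∑ s, l s ^ 2) ^ 3 / (∑ s, l s ^ 3) ^ 2 := by
  have hS2 : l i ^ 2 ≤ ∑ s, l s ^ 2 :=
    Finset.single_le_sum (fun s _ => sq_nonneg (l s)) (Finset.mem_univ i)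
  have hS3 : l i ^ 3 ≤ ∑ s, l s ^ 3 :=
    Finset.single_le_sum (fun s _ => pow_nonneg (hnn s) 3) (Finset.mem_univ i)
  have hS2pos : 0 < ∑ s, l s ^ 2 := (pow_pos hi 2).trans_le hS2
  have hS3pos : 0 < ∑ s, l s ^ 3 := (pow_pos hi 3).trans_le hS3
  calc (l i / √(∑ s, l s ^ 2))⁻¹ ^ 2 = (∑ s, l s ^ 2) ^ 3 / (l i * ∑ s, l s ^ 2) ^ 2 := by
        rw [inv_div, div_pow, Real.sq_sqrt hS2pos.le]
        field_simp
    _ ≤ (∑ s, l s ^ 2) ^ 3 / (∑ s, l s ^ 3) ^ 2 := by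
        gcongr
        exact sum_pow_three_le_mul_sum_sq hmax

lemma div_le_inv_div_sqrt_sum_sq_pow_six (hnn : ∀ s, 0 ≤ l s) (hi : 0 < l i) :
    (∑ s, l s ^ 2) ^ 3 / (∑ s, l s ^ 3) ^ 2 ≤ (l i / √(∑ s, l s ^ 2))⁻¹ ^ 6 := by
  have hS3 : l i ^ 3 ≤ ∑ s, l s ^ 3 :=
    Finset.single_le_sum (fun s _ => pow_nonneg (hnn s) 3) (Finset.mem_univ i)
  calc (∑ s, l s ^ 2) ^ 3 / (∑ s, l s ^ 3) ^ 2 ≤ (∑ s, l s ^ 2) ^ 3 / (l i ^ 3) ^ 2 := by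
        gcongr
    _ = (l i / √(∑ s, l s ^ 2))⁻¹ ^ 6 := by
        rw [inv_div, div_pow, show 6 = 2 * 3 by rfl, pow_mul, Real.sq_sqrt (by positivity)]
        ring

end PowerSums

/-- For triangular arrays of decreasing nonnegative reals with positive sum of squares,
the largest standardized eigenvalue `β₁^{(N)}` tends to `0` iff `f_N` tends to `∞`. -/
theorem beta_one_to_zero_iff_f_to_infty (m : ℕ → ℕ) (hm : ∀ N, 0 < m N)
    (l : (N : ℕ) → Fin (m N) → ℝ)
    (hnn : ∀ N s, 0 ≤ l N s) (hmono : ∀ N, ∀ s t : Fin (m N), s ≤ t → l N t ≤ l N s)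
    (hpos : ∀ N, 0 < ∑ s, (l N s) ^ 2) :
    Tendsto (fun N => l N ⟨0, hm N⟩ / Real.sqrt (∑ ℓ, (l N ℓ) ^ 2)) atTop (nhds 0) ↔
    Tendsto (fun N => (∑ s, (l N s) ^ 2) ^ 3 / (∑ s, (l N s) ^ 3) ^ 2) atTop atTop := by
  have hmax : ∀ N s, l N s ≤ l N ⟨0, hm N⟩ := fun N s => hmono N _ s (Nat.zero_le _)
  have hfirst : ∀ N, 0 < l N ⟨0, hm N⟩ := fun N => pos_of_sum_sq_pos (hnn N) (hmax N) (hpos N)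
  have hbeta : ∀ N, 0 < l N ⟨0, hm N⟩ / √(∑ ℓ, l N ℓ ^ 2) :=
    fun N => div_pos (hfirst N) (Real.sqrt_pos.2 (hpos N))
  rw [tendsto_nhds_zero_iff_tendsto_inv_atTop hbeta]
  exact tendsto_atTop_iff_of_pow_le_of_le_pow (fun N => (inv_pos.2 (hbeta N)).le) two_ne_zero
    (by norm_num : (6 : ℕ) ≠ 0)
    (fun N => inv_div_sqrt_sum_sq_pow_two_le (hnn N) (hmax N) (hfirst N))
    (fun N => div_le_inv_div_sqrt_sum_sq_pow_six (hnn N) (hfirst N))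
end

section
/- If two functions of the form t ↦ ∏_{ℓ=1}^{r} (1 − √2 b_ℓ t) exp(−√2 b_ℓ t) and t ↦ ∏_{ℓ=1}^{r'} (1 − √2 b'_ℓ t) exp(−√2 b'_ℓ t), with b₁ ≥ ... ≥ b_r > 0 and b'₁ ≥ ... ≥ b'_{r'} > 0, agree for all real t, then r = r' and b_ℓ = b'_ℓ for all ℓ. -/
/-!
Each side is `dampedProduct` of the multiset of rates `√2 b_ℓ`, which vanishes exactly at the
inverses of its rates. So a rate `c` of one side is a rate of the other; cancelling the common
factor `(1 - c t) e^{-ct}`, which vanishes only at `t = c⁻¹`, keeps the identity on a dense set and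
hence, by continuity, everywhere. Induction shows that the two multisets of rates coincide, and
two decreasing enumerations of the same multiset are equal.
-/

open Real

noncomputable def dampedProduct (s : Multiset ℝ) (t : ℝ) : ℝ :=
  (s.map fun c => (1 - c * t) * exp (-(c * t))).prod

namespace dampedProduct

@[simp]
theorem zero : dampedProduct 0 = 1 := by
  funext t
  simp [dampedProduct]

@[simp]
theorem cons (c : ℝ) (s : Multiset ℝ) (t : ℝ) :
    dampedProduct (c ::ₘ s) t = (1 - c * t) * exp (-(c * t)) * dampedProduct s t := by
  simp [dampedProduct]

theorem ofFn {n : ℕ} (c : Fin n → ℝ) (t : ℝ) :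
    dampedProduct (List.ofFn c : Multiset ℝ) t = ∏ i, (1 - c i * t) * exp (-(c i * t)) := by
  simp [dampedProduct, List.map_ofFn, List.prod_ofFn, Function.comp_def]

theorem continuous (s : Multiset ℝ) : Continuous (dampedProduct s) :=
  continuous_multiset_prod s fun _ _ => by fun_prop

theorem eq_zero_iff {s : Multiset ℝ} {t : ℝ} : dampedProduct s t = 0 ↔ ∃ c ∈ s, c * t = 1 := by
  simp only [dampedProduct, Multiset.prod_eq_zero_iff, Multiset.mem_map, mul_eq_zero,
    exp_ne_zero, or_false, sub_eq_zero, eq_comm (a := (1 : ℝ))]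

theorem eq_zero_at_inv {s : Multiset ℝ} {c : ℝ} (hc : c ∈ s) (hc0 : c ≠ 0) :
    dampedProduct s c⁻¹ = 0 :=
  eq_zero_iff.2 ⟨c, hc, mul_inv_cancel₀ hc0⟩

theorem cancel_cons {c : ℝ} {s s' : Multiset ℝ}
    (h : dampedProduct (c ::ₘ s) = dampedProduct (c ::ₘ s')) :
    dampedProduct s = dampedProduct s' := by
  refine (continuous s).ext_on (dense_compl_singleton c⁻¹) (continuous s') fun t ht => ?_
  have hfactor : (1 - c * t) * exp (-(c * t)) ≠ 0 :=
    mul_ne_zero (fun h0 => ht (eq_inv_of_mul_eq_one_right (sub_eq_zero.1 h0).symm))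
      (exp_ne_zero _)
  simpa only [cons, mul_right_inj' hfactor] using congrFun h t

theorem injOn : {s : Multiset ℝ | 0 ∉ s}.InjOn dampedProduct := by
  intro s hs s' hs' h
  induction s using Multiset.induction_on generalizing s' with
  | empty =>
    by_contra hne
    obtain ⟨c, hc⟩ := Multiset.exists_mem_of_ne_zero (Ne.symm hne)
    have := congrFun h c⁻¹
    rw [eq_zero_at_inv hc (ne_of_mem_of_not_mem hc hs'), zero] at this
    exact one_ne_zero this
  | cons c s ih =>
    have hc0 : c ≠ 0 := ne_of_mem_of_not_mem (Multiset.mem_cons_self c s) hs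
    obtain ⟨c', hc', hcc'⟩ := eq_zero_iff.1 <|
      (congrFun h c⁻¹).symm.trans (eq_zero_at_inv (Multiset.mem_cons_self c s) hc0)
    obtain rfl : c' = c := mul_inv_eq_one₀ hc0 |>.1 hcc'
    rw [← Multiset.cons_erase hc'] at h hs' ⊢
    exact congrArg _ <| ih (fun h0 => hs (Multiset.mem_cons_of_mem h0))
      (fun h0 => hs' (Multiset.mem_cons_of_mem h0)) (cancel_cons h)

end dampedProduct

/-- If `∏ (1 - √2 b_ℓ t) exp(-√2 b_ℓ t)` with positive decreasing weights agree for all `t`,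
then the numbers of factors and the weights coincide. -/
theorem factors_determined_by_product
    {r r' : ℕ} (b : Fin r → ℝ) (b' : Fin r' → ℝ)
    (hb : ∀ ℓ, 0 < b ℓ) (hb' : ∀ ℓ, 0 < b' ℓ)
    (hbmono : ∀ i j : Fin r, i ≤ j → b j ≤ b i)
    (hb'mono : ∀ i j : Fin r', i ≤ j → b' j ≤ b' i)
    (h : ∀ t : ℝ,
      ∏ ℓ, (1 - Real.sqrt 2 * b ℓ * t) * Real.exp (-(Real.sqrt 2 * b ℓ * t)) =
      ∏ ℓ, (1 - Real.sqrt 2 * b' ℓ * t) * Real.exp (-(Real.sqrt 2 * b' ℓ * t))) :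
    r = r' ∧ ∀ (ℓ : ℕ) (hℓ : ℓ < r) (hℓ' : ℓ < r'), b ⟨ℓ, hℓ⟩ = b' ⟨ℓ, hℓ'⟩ := by
  have hsqrt : 0 < √2 := by positivity
  have hrates_ne_zero {n : ℕ} (c : Fin n → ℝ) (hc : ∀ ℓ, 0 < c ℓ) :
      (0 : ℝ) ∉ (List.ofFn fun ℓ => √2 * c ℓ : Multiset ℝ) := by
    simpa [List.mem_ofFn] using fun ℓ => (mul_pos hsqrt (hc ℓ)).ne
  have hperm := Multiset.coe_eq_coe.1 <| dampedProduct.injOn (hrates_ne_zero b hb) (hrates_ne_zero b' hb') <|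
    funext fun t => by simpa only [dampedProduct.ofFn] using h t
  have hlist := hperm.eq_of_sortedGE
    (List.sortedGE_ofFn_iff.2 fun i j hij => mul_le_mul_of_nonneg_left (hbmono i j hij) hsqrt.le)
    (List.sortedGE_ofFn_iff.2 fun i j hij => mul_le_mul_of_nonneg_left (hb'mono i j hij) hsqrt.le)
  refine ⟨by simpa using congrArg List.length hlist, fun ℓ hℓ hℓ' => ?_⟩
  simpa [hℓ, hℓ', hsqrt.ne'] using congrArg (·[ℓ]?) hlist
end
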